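/- arXiv:1311.0798 — 6 statements merged into one kernel-verified Lean document; each statement's English description precedes it below -/
import Mathlib

section
/- With the heavy-path labeling scheme, the labeling function v ↦ ℓ(v) is injective: distinct nodes of the rooted tree receive distinct labels. -/
/-- A finite rooted tree, given by a parent function converging to the root. -/
structure ParentTree (V : Type*) where
  root : V
  parent : V → V
  parent_root : parent root = root
  parent_ne : ∀ v, v ≠ root → parent v ≠ v
  reaches_root : ∀ v, ∃ n, parent^[n] v = root

namespace ParentTree

variable {V : Type*}

/-- `u` is in the subtree rooted at `v` (i.e. `v` is an ancestor of `u`, possibly `u` itself). -/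
def Descend (t : ParentTree V) (v u : V) : Prop := ∃ n, t.parent^[n] u = v

/-- Number of vertices of the subtree rooted at `v`. -/
noncomputable def size (t : ParentTree V) (v : V) : ℕ := Nat.card {u | t.Descend v u}

/-- `c` is a child of `v`. -/
def IsChild (t : ParentTree V) (c v : V) : Prop := c ≠ t.root ∧ t.parent c = v

end ParentTree

/-- `heavy` designates, for every node with at least one child, a child of
maximal subtree size (the heavy child). -/
def HeavyChoice {V : Type*} [Fintype V] (t : ParentTree V) (heavy : V → V) : Prop :=
  ∀ v, (∃ c, t.IsChild c v) →
    t.IsChild (heavy v) v ∧ ∀ c, t.IsChild c v → t.size c ≤ t.size (heavy v)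

/-- The heavy-path labeling scheme: the root is labeled `[(id root, 0)]`;
a heavy child takes its parent's label with the last distance incremented;
a light child appends the pair `(own id, 0)` to its parent's label. -/
def HeavyLabeling {V : Type*} [Fintype V] (t : ParentTree V) (heavy : V → V)
    (id : V → ℕ) (ℓ : V → List (ℕ × ℕ)) : Prop :=
  HeavyChoice t heavy ∧ Function.Injective id ∧
  ℓ t.root = [(id t.root, 0)] ∧
  ∀ v, v ≠ t.root →
    (v = heavy (t.parent v) →
      ∃ L x d, ℓ (t.parent v) = L ++ [(x, d)] ∧ ℓ v = L ++ [(x, d + 1)]) ∧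
    (v ≠ heavy (t.parent v) → ℓ v = ℓ (t.parent v) ++ [(id v, 0)])

namespace ParentTree

variable {V : Type*}

theorem induction_on_parent (t : ParentTree V) {P : V → Prop} (root : P t.root)
    (step : ∀ v, v ≠ t.root → P (t.parent v) → P v) (v : V) : P v := by
  obtain ⟨n, hn⟩ := t.reaches_root v
  induction n generalizing v with
  | zero => simpa [← hn] using root
  | succ n ih =>
    by_cases hv : v = t.root
    · exact hv ▸ root
    · exact step v hv (ih _ (by rwa [Function.iterate_succ_apply] at hn))

end ParentTree

/-- The last pair `(x, d)` of a label says that the node lies `d` heavy steps below the node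
with identifier `x`, namely the head of its heavy path. -/
theorem HeavyLabeling.exists_getLast?_eq {V : Type*} [Fintype V] {t : ParentTree V}
    {heavy : V → V} {id : V → ℕ} {ℓ : V → List (ℕ × ℕ)} (hl : HeavyLabeling t heavy id ℓ)
    (v : V) : ∃ w d, (ℓ v).getLast? = some (id w, d) ∧ heavy^[d] w = v := by
  obtain ⟨-, -, hroot, hstep⟩ := hl
  induction v using t.induction_on_parent with
  | root => exact ⟨t.root, 0, by simp [hroot], rfl⟩
  | step v hv ih =>
    obtain ⟨w, d, hlast, hw⟩ := ih
    by_cases hheavy : v = heavy (t.parent v)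
    · obtain ⟨L, x, e, hparent, hchild⟩ := (hstep v hv).1 hheavy
      obtain ⟨rfl, rfl⟩ : x = id w ∧ e = d := by simpa [hparent] using hlast
      refine ⟨w, e + 1, by simp [hchild], ?_⟩
      rw [Function.iterate_succ_apply', hw, ← hheavy]
    · exact ⟨v, 0, by simp [(hstep v hv).2 hheavy], rfl⟩

/-- The heavy-path labeling is injective: distinct nodes get distinct labels. -/
theorem stmt9 {V : Type*} [Fintype V] (t : ParentTree V) (heavy : V → V)
    (id : V → ℕ) (ℓ : V → List (ℕ × ℕ)) (hl : HeavyLabeling t heavy id ℓ) :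
    Function.Injective ℓ := by
  intro u v huv
  obtain ⟨w, d, hu, rfl⟩ := hl.exists_getLast?_eq u
  obtain ⟨w', d', hv, rfl⟩ := hl.exists_getLast?_eq v
  obtain ⟨hid, rfl⟩ : id w' = id w ∧ d' = d := by simpa [huv, hv] using hu
  rw [hl.2.1 hid]
end

section
/- With the heavy-path labeling scheme, for any node v, the label of every ancestor of v is determined by ℓ(v): a node a is an ancestor of v if and only if ℓ(a) is obtained from ℓ(v) by taking a prefix of the pair list and possibly decreasing the distance component of its last pair. Consequently, ℓ(a) is a 'prefix' of ℓ(v) in this sense. -/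
/-- `ℓ₁ ⪯ ℓ₂`: `ℓ₁` is obtained from `ℓ₂` by taking a prefix of the pair list and
possibly decreasing the distance component of its last pair. -/
def LabelPrefix (ℓ₁ ℓ₂ : List (ℕ × ℕ)) : Prop :=
  ∃ (P S : List (ℕ × ℕ)) (x d d' : ℕ),
    ℓ₂ = P ++ [(x, d)] ++ S ∧ ℓ₁ = P ++ [(x, d')] ∧ d' ≤ d

/-! Both relations obey the same recursion along parent edges: `a` is an ancestor of `v` iff
`a = v` or `a` is an ancestor of the parent of `v`, and `ℓ₁ ⪯ ℓ v` iff `ℓ₁ = ℓ v` or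
`ℓ₁ ⪯ ℓ (parent v)`, because the last pair of `ℓ v` either is new or has grown by one. The
labeling is injective (light children are told apart by their identifiers, a heavy child from a
light one by its positive last distance), so induction from the root gives the theorem. -/

namespace ParentTree

variable {V : Type*} (t : ParentTree V)

@[elab_as_elim]
theorem induction_from_root {P : V → Prop} (root : P t.root)
    (parent : ∀ v, v ≠ t.root → P (t.parent v) → P v) (v : V) : P v := by
  obtain ⟨n, hn⟩ := t.reaches_root v
  induction n generalizing v with
  | zero =>
    obtain rfl : v = t.root := hn
    exact root
  | succ n ih =>
    by_cases hv : v = t.root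
    · rwa [hv]
    · exact parent v hv (ih _ (by rwa [← Function.iterate_succ_apply]))

theorem descend_root_iff {a : V} : t.Descend a t.root ↔ a = t.root := by
  refine ⟨fun ⟨n, hn⟩ => ?_, fun h => ⟨0, h.symm⟩⟩
  rw [Function.iterate_fixed t.parent_root] at hn
  exact hn.symm

theorem descend_iff {a v : V} : t.Descend a v ↔ a = v ∨ t.Descend a (t.parent v) := by
  constructor
  · rintro ⟨_ | n, hn⟩
    · exact Or.inl hn.symm
    · exact Or.inr ⟨n, hn⟩
  · rintro (rfl | ⟨n, hn⟩)
    · exact ⟨0, rfl⟩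
    · exact ⟨n + 1, hn⟩

end ParentTree

theorem not_labelPrefix_nil (l : List (ℕ × ℕ)) : ¬ LabelPrefix l [] := by
  rintro ⟨P, S, x, d, d', h, -⟩
  simp at h

theorem labelPrefix_append_singleton_iff {l m : List (ℕ × ℕ)} {y e : ℕ} :
    LabelPrefix l (m ++ [(y, e)]) ↔ (∃ e' ≤ e, l = m ++ [(y, e')]) ∨ LabelPrefix l m := by
  constructor
  · rintro ⟨P, S, x, d, d', hm, rfl, hd⟩
    rcases S.eq_nil_or_concat' with rfl | ⟨S, q, rfl⟩
    · simp only [List.append_nil, List.append_singleton_inj, Prod.mk.injEq] at hm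
      obtain ⟨rfl, rfl, rfl⟩ := hm
      exact Or.inl ⟨d', hd, rfl⟩
    · rw [← List.append_assoc, List.append_singleton_inj] at hm
      obtain ⟨rfl, -⟩ := hm
      exact Or.inr ⟨P, S, x, d, d', rfl, rfl, hd⟩
  · rintro (⟨e', he, rfl⟩ | ⟨P, S, x, d, d', rfl, rfl, hd⟩)
    · exact ⟨m, [], y, e, e', by simp, rfl, he⟩
    · exact ⟨P, S ++ [(y, e)], x, d, d', by simp, rfl, hd⟩

namespace HeavyLabeling

variable {V : Type*} [Fintype V] {t : ParentTree V} {heavy : V → V} {id : V → ℕ}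
  {ℓ : V → List (ℕ × ℕ)}

theorem label_step (hl : HeavyLabeling t heavy id ℓ) {v : V} (hv : v ≠ t.root) :
    (v = heavy (t.parent v) ∧
      ∃ L x d, ℓ (t.parent v) = L ++ [(x, d)] ∧ ℓ v = L ++ [(x, d + 1)]) ∨
    ℓ v = ℓ (t.parent v) ++ [(id v, 0)] := by
  obtain ⟨hheavy, hlight⟩ := hl.2.2.2 v hv
  by_cases h : v = heavy (t.parent v)
  · exact Or.inl ⟨h, hheavy h⟩
  · exact Or.inr (hlight h)

theorem labelPrefix_root_iff (hl : HeavyLabeling t heavy id ℓ) {l : List (ℕ × ℕ)} :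
    LabelPrefix l (ℓ t.root) ↔ l = ℓ t.root := by
  rw [hl.2.2.1, ← List.nil_append [_], labelPrefix_append_singleton_iff]
  simp [not_labelPrefix_nil]

theorem labelPrefix_iff_of_ne_root (hl : HeavyLabeling t heavy id ℓ) {v : V}
    (hv : v ≠ t.root) {l : List (ℕ × ℕ)} :
    LabelPrefix l (ℓ v) ↔ l = ℓ v ∨ LabelPrefix l (ℓ (t.parent v)) := by
  rcases hl.label_step hv with ⟨-, L, x, d, hp, hlv⟩ | hlv
  · simp only [hp, hlv, labelPrefix_append_singleton_iff, Nat.le_succ_iff, or_and_right,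
      exists_or, exists_eq_left, or_assoc]
    exact or_left_comm
  · simp [hlv, labelPrefix_append_singleton_iff]

theorem label_ne_label_root (hl : HeavyLabeling t heavy id ℓ) {v : V} (hv : v ≠ t.root) :
    ℓ v ≠ ℓ t.root := by
  rw [hl.2.2.1]
  rcases hl.label_step hv with ⟨-, L, x, d, -, h⟩ | h <;> rw [h] <;> intro h'
  · simp [List.append_eq_singleton_iff] at h'
  · simp [List.append_eq_singleton_iff] at h'
    exact hv (hl.2.1 h'.2)

theorem label_injective (hl : HeavyLabeling t heavy id ℓ) : Function.Injective ℓ := by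
  intro a
  induction a using t.induction_from_root with
  | root => exact fun b h => by_contra fun hb => hl.label_ne_label_root (Ne.symm hb) h.symm
  | parent a ha ih =>
    intro b hab
    by_cases hb : b = t.root
    · subst hb
      exact absurd hab (hl.label_ne_label_root ha)
    rcases hl.label_step ha with ⟨ha', L, x, d, hpa, hla⟩ | hla <;>
      rcases hl.label_step hb with ⟨hb', L', x', d', hpb, hlb⟩ | hlb <;>
      simp only [hla, hlb, List.append_singleton_inj, Prod.mk.injEq, add_left_inj] at hab
    · obtain ⟨rfl, rfl, rfl⟩ := hab
      rw [ha', hb', ih (hpa.trans hpb.symm)]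
    · exact absurd hab.2.2 d.succ_ne_zero
    · exact absurd hab.2.2.symm d'.succ_ne_zero
    · exact hl.2.1 hab.2.1

end HeavyLabeling

/-- `a` is an ancestor of `v` (including `v` itself) iff `ℓ a ⪯ ℓ v`; in particular
the labels of all ancestors of `v` are determined by `ℓ v`. -/
theorem stmt10 {V : Type*} [Fintype V] (t : ParentTree V) (heavy : V → V)
    (id : V → ℕ) (ℓ : V → List (ℕ × ℕ)) (hl : HeavyLabeling t heavy id ℓ) :
    ∀ a v : V, t.Descend a v ↔ LabelPrefix (ℓ a) (ℓ v) := by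
  intro a v
  induction v using t.induction_from_root with
  | root => rw [t.descend_root_iff, hl.labelPrefix_root_iff, hl.label_injective.eq_iff]
  | parent v hv ih =>
    rw [t.descend_iff, ih, hl.labelPrefix_iff_of_ne_root hv, hl.label_injective.eq_iff]
end

section
/- With the heavy-path labeling scheme, the nearest common ancestor of two nodes u and v in the same rooted tree is computable from ℓ(u) and ℓ(v) alone: its label equals the longest common prefix of the two pair lists, extended by the pair with the common identifier and the minimum of the two distance values at the first position where the lists differ (if the identifiers at that position agree), and is otherwise exactly the longest common prefix position handled analogously; in particular, ℓ(nca(u,v)) is a function of (ℓ(u), ℓ(v)). -/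
/-!
Order labels by `A ≼ U` (`LabelLE A U`) when `A = P ++ [(x, d)]` and `U = P ++ [(x, d')] ++ R`
with `d ≤ d'`. Passing from a node to its parent either decrements the last distance or drops the
last pair, so `ℓ a ≼ ℓ u` whenever `a` is an ancestor of `u`; conversely every `A ≼ ℓ u` is the
label of an ancestor of `u`, and `ℓ` is injective. Hence the ancestors of `u` correspond to the
`≼`-lower bounds of `ℓ u`, and the nearest common ancestor of `u` and `v` is labeled by the
greatest common lower bound of `ℓ u` and `ℓ v` (`≼` is antisymmetric), which the decoder computes
by scanning both lists in parallel.
-/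

namespace ParentTree

variable {V : Type*} (t : ParentTree V)

theorem induction_parent {P : V → Prop} (h_root : P t.root)
    (h_step : ∀ v, v ≠ t.root → P (t.parent v) → P v) (v : V) : P v := by
  obtain ⟨n, hn⟩ := t.reaches_root v
  induction n generalizing v with
  | zero =>
    obtain rfl : v = t.root := hn
    exact h_root
  | succ n ih =>
    by_cases hv : v = t.root
    · exact hv ▸ h_root
    · exact h_step v hv (ih _ (by rwa [← Function.iterate_succ_apply]))

theorem descend_root (v : V) : t.Descend t.root v := t.reaches_root v

end ParentTree

namespace HeavyPathLabel

abbrev Label := List (ℕ × ℕ)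

def LabelLE (A U : Label) : Prop :=
  ∃ (P : Label) (x d d' : ℕ) (R : Label), A = P ++ [(x, d)] ∧ U = P ++ [(x, d')] ++ R ∧ d ≤ d'

def ncaLabel : Label → Label → Label
  | (x, d) :: l₁, (y, e) :: l₂ =>
    if x = y then (if d = e then (x, d) :: ncaLabel l₁ l₂ else [(x, min d e)]) else []
  | _, _ => []

theorem exists_eq_append_of_append_eq_concat {α : Type*} {A R M : List α} {q : α}
    (h : A ++ R = M ++ [q]) (hR : R ≠ []) : ∃ T, M = A ++ T := by
  rcases List.append_eq_append_iff.mp h with ⟨T, hM, -⟩ | ⟨T, hA, hq⟩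
  · exact ⟨T, hM⟩
  · obtain rfl : T = [] := by
      rcases List.singleton_eq_append_iff.mp hq with ⟨hT, -⟩ | ⟨-, hR'⟩
      · exact hT
      · exact absurd hR' hR
    exact ⟨[], by simp [hA]⟩

theorem LabelLE.ne_nil {A U : Label} (h : LabelLE A U) : U ≠ [] := by
  obtain ⟨P, x, d, d', R, -, rfl, -⟩ := h
  simp

theorem singleton_labelLE {x d d' : ℕ} (R : Label) (h : d ≤ d') :
    LabelLE [(x, d)] ((x, d') :: R) :=
  ⟨[], x, d, d', R, rfl, rfl, h⟩

theorem LabelLE.cons {A U : Label} (p : ℕ × ℕ) (h : LabelLE A U) : LabelLE (p :: A) (p :: U) := by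
  obtain ⟨P, x, d, d', R, rfl, rfl, hd⟩ := h
  exact ⟨p :: P, x, d, d', R, rfl, rfl, hd⟩

theorem labelLE_refl {A : Label} (h : A ≠ []) : LabelLE A A := by
  rcases List.eq_nil_or_concat A with rfl | ⟨P, ⟨x, d⟩, rfl⟩
  · exact absurd rfl h
  exact ⟨P, x, d, d, [], by simp, by simp, le_rfl⟩

theorem LabelLE.trans {A B C : Label} (h₁ : LabelLE A B) (h₂ : LabelLE B C) : LabelLE A C := by
  obtain ⟨P, x, d, d', R, rfl, rfl, hd⟩ := h₁
  obtain ⟨Q, y, e, e', S, hB, rfl, he⟩ := h₂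
  rcases eq_or_ne R [] with rfl | hR
  · simp only [List.append_nil, List.append_singleton_inj, Prod.mk.injEq] at hB
    obtain ⟨rfl, rfl, rfl⟩ := hB
    exact ⟨P, x, d, e', S, rfl, rfl, hd.trans he⟩
  · obtain ⟨T, rfl⟩ := exists_eq_append_of_append_eq_concat hB hR
    exact ⟨P, x, d, d', T ++ [(y, e')] ++ S, rfl, by simp, hd⟩

theorem LabelLE.antisymm {A B : Label} (h₁ : LabelLE A B) (h₂ : LabelLE B A) : A = B := by
  obtain ⟨P, x, d, d', R, rfl, hB, hd⟩ := h₁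
  obtain ⟨Q, y, e, e', S, rfl, hA, he⟩ := h₂
  have hRS : R = [] ∧ S = [] := by
    have h₁ := congrArg List.length hA
    have h₂ := congrArg List.length hB
    simp only [List.length_append, List.length_singleton] at h₁ h₂
    simp only [← List.length_eq_zero_iff]
    omega
  obtain ⟨rfl, rfl⟩ := hRS
  simp only [List.append_nil, List.append_singleton_inj, Prod.mk.injEq] at hA hB
  obtain ⟨rfl, rfl, rfl⟩ := hA
  obtain ⟨-, -, rfl⟩ := hB
  simp only [List.append_singleton_inj, Prod.mk.injEq, true_and]
  omega

theorem ncaLabel_cons_cons_self (x d₁ d₂ : ℕ) (r₁ r₂ : Label) :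
    ncaLabel ((x, d₁) :: r₁) ((x, d₂) :: r₂) =
      (x, min d₁ d₂) :: (if d₁ = d₂ then ncaLabel r₁ r₂ else []) := by
  by_cases hd : d₁ = d₂ <;> simp [ncaLabel, hd]

theorem ncaLabel_comm : ∀ l₁ l₂ : Label, ncaLabel l₁ l₂ = ncaLabel l₂ l₁
  | (x, d) :: l₁, (y, e) :: l₂ => by
    by_cases hxy : x = y
    · subst hxy
      by_cases hd : d = e
      · simp [ncaLabel_cons_cons_self, hd, ncaLabel_comm l₁ l₂]
      · simp [ncaLabel_cons_cons_self, hd, Ne.symm hd, min_comm]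
    · simp [ncaLabel, hxy, Ne.symm hxy]
  | [], [] | [], _ :: _ | _ :: _, [] => rfl

theorem labelLE_ncaLabel {B l₁ l₂ : Label} (h₁ : LabelLE B l₁) (h₂ : LabelLE B l₂) :
    LabelLE B (ncaLabel l₁ l₂) := by
  obtain ⟨P, x, d, d₁, R₁, rfl, rfl, hd₁⟩ := h₁
  obtain ⟨Q, y, e, d₂, R₂, hB, rfl, hd₂⟩ := h₂
  simp only [List.append_singleton_inj, Prod.mk.injEq] at hB
  obtain ⟨rfl, rfl, rfl⟩ := hB
  induction P with
  | nil =>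
    simp only [List.nil_append, List.singleton_append, ncaLabel_cons_cons_self]
    exact singleton_labelLE _ (le_min hd₁ hd₂)
  | cons p P ih =>
    obtain ⟨a, b⟩ := p
    simpa only [List.cons_append, ncaLabel_cons_cons_self, min_self, if_true] using ih.cons _

theorem ncaLabel_eq_nil_or_labelLE_left :
    ∀ l₁ l₂ : Label, ncaLabel l₁ l₂ = [] ∨ LabelLE (ncaLabel l₁ l₂) l₁
  | (x, d) :: l₁, (y, e) :: l₂ => by
    by_cases hxy : x = y
    · subst hxy
      right
      rw [ncaLabel_cons_cons_self]
      by_cases hd : d = e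
      · subst hd
        rw [if_pos rfl, min_self]
        rcases ncaLabel_eq_nil_or_labelLE_left l₁ l₂ with h | h
        · rw [h]
          exact singleton_labelLE _ le_rfl
        · exact h.cons _
      · rw [if_neg hd]
        exact singleton_labelLE _ (min_le_left d e)
    · simp [ncaLabel, hxy]
  | [], _ | _ :: _, [] => by simp [ncaLabel]

theorem ncaLabel_labelLE_left {B l₁ l₂ : Label} (h₁ : LabelLE B l₁) (h₂ : LabelLE B l₂) :
    LabelLE (ncaLabel l₁ l₂) l₁ :=
  (ncaLabel_eq_nil_or_labelLE_left l₁ l₂).resolve_left (labelLE_ncaLabel h₁ h₂).ne_nil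

theorem ncaLabel_labelLE_right {B l₁ l₂ : Label} (h₁ : LabelLE B l₁) (h₂ : LabelLE B l₂) :
    LabelLE (ncaLabel l₁ l₂) l₂ :=
  ncaLabel_comm l₂ l₁ ▸ ncaLabel_labelLE_left h₂ h₁

end HeavyPathLabel

namespace HeavyPathLabel

section Tree

variable {V : Type*} [Fintype V] {t : ParentTree V} {heavy : V → V} {id : V → ℕ}
  {ℓ : V → Label} (h : HeavyLabeling t heavy id ℓ)
include h

theorem label_of_ne_root {v : V} (hv : v ≠ t.root) :
    (v = heavy (t.parent v) ∧
      ∃ L x d, ℓ (t.parent v) = L ++ [(x, d)] ∧ ℓ v = L ++ [(x, d + 1)]) ∨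
    ℓ v = ℓ (t.parent v) ++ [(id v, 0)] := by
  by_cases hh : v = heavy (t.parent v)
  · exact .inl ⟨hh, (h.2.2.2 v hv).1 hh⟩
  · exact .inr ((h.2.2.2 v hv).2 hh)

theorem label_ne_nil (v : V) : ℓ v ≠ [] := by
  by_cases hv : v = t.root
  · simp [hv, h.2.2.1]
  · rcases label_of_ne_root h hv with ⟨-, L, x, d, -, hv'⟩ | hv' <;> simp [hv']

theorem label_ne_label_root {v : V} (hv : v ≠ t.root) : ℓ v ≠ ℓ t.root := by
  rw [h.2.2.1]
  rcases label_of_ne_root h hv with ⟨-, L, x, d, -, hv'⟩ | hv' <;>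
    simp [hv', List.append_eq_singleton_iff, label_ne_nil h]

theorem labelLE_label_parent {v : V} (hv : v ≠ t.root) : LabelLE (ℓ (t.parent v)) (ℓ v) := by
  rcases label_of_ne_root h hv with ⟨-, L, x, d, hp, hv'⟩ | hv'
  · exact ⟨L, x, d, d + 1, [], hp, by simp [hv'], d.le_succ⟩
  · rcases List.eq_nil_or_concat (ℓ (t.parent v)) with hp | ⟨L, ⟨x, d⟩, hp⟩
    · exact absurd hp (label_ne_nil h _)
    · exact ⟨L, x, d, d, [(id v, 0)], by simp [hp], by simp [hv', hp], le_rfl⟩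

theorem labelLE_of_descend {a u : V} (hau : t.Descend a u) : LabelLE (ℓ a) (ℓ u) := by
  obtain ⟨n, rfl⟩ := hau
  induction n with
  | zero => exact labelLE_refl (label_ne_nil h u)
  | succ n ih =>
    rw [Function.iterate_succ_apply']
    by_cases hw : t.parent^[n] u = t.root
    · rwa [hw, t.parent_root, ← hw]
    · exact (labelLE_label_parent h hw).trans ih

theorem eq_label_root_of_labelLE {A : Label} (hA : LabelLE A (ℓ t.root)) : A = ℓ t.root := by
  obtain ⟨P, x, d, d', R, rfl, hr, hd⟩ := hA
  rw [h.2.2.1] at hr ⊢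
  simp only [List.append_assoc, List.cons_append, List.nil_append, List.singleton_eq_append_iff,
    List.cons.injEq, Prod.mk.injEq, reduceCtorEq, and_false, or_false] at hr
  obtain ⟨rfl, ⟨rfl, rfl⟩, -⟩ := hr
  obtain rfl : d = 0 := by omega
  rfl

theorem labelLE_label_parent_of_labelLE {v : V} (hv : v ≠ t.root) {A : Label}
    (hA : LabelLE A (ℓ v)) (hne : A ≠ ℓ v) : LabelLE A (ℓ (t.parent v)) := by
  obtain ⟨P, y, e, e', R, rfl, hv', he⟩ := hA
  rcases label_of_ne_root h hv with ⟨-, L, x, d, hp, hv''⟩ | hv''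
  · rcases eq_or_ne R [] with rfl | hR
    · rw [List.append_nil, hv'', List.append_singleton_inj, Prod.mk.injEq] at hv'
      obtain ⟨rfl, rfl, rfl⟩ := hv'
      have : e ≠ d + 1 := by rintro rfl; exact hne hv''.symm
      exact ⟨L, x, e, d, [], rfl, by simp [hp], by omega⟩
    · obtain ⟨T, rfl⟩ := exists_eq_append_of_append_eq_concat (hv'.symm.trans hv'') hR
      exact ⟨P, y, e, e', T ++ [(x, d)], rfl, by simp [hp], he⟩
  · rcases eq_or_ne R [] with rfl | hR
    · rw [List.append_nil, hv'', List.append_singleton_inj, Prod.mk.injEq] at hv'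
      obtain ⟨hP, rfl, rfl⟩ := hv'
      obtain rfl : e = 0 := by omega
      exact absurd (by rw [hv'', hP]) hne
    · obtain ⟨T, hT⟩ := exists_eq_append_of_append_eq_concat (hv'.symm.trans hv'') hR
      exact ⟨P, y, e, e', T, rfl, hT, he⟩

theorem exists_descend_label_eq (u : V) {A : Label} (hA : LabelLE A (ℓ u)) :
    ∃ b, t.Descend b u ∧ ℓ b = A := by
  induction u using t.induction_parent generalizing A with
  | h_root => exact ⟨t.root, ⟨0, rfl⟩, (eq_label_root_of_labelLE h hA).symm⟩
  | h_step u hu ih =>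
    by_cases hAu : A = ℓ u
    · exact ⟨u, ⟨0, rfl⟩, hAu.symm⟩
    · obtain ⟨b, ⟨k, hk⟩, hb⟩ := ih (labelLE_label_parent_of_labelLE h hu hA hAu)
      exact ⟨b, ⟨k + 1, hk⟩, hb⟩

theorem label_injective : Function.Injective ℓ := by
  intro b u hbu
  induction u using t.induction_parent generalizing b with
  | h_root => by_contra hb; exact label_ne_label_root h hb hbu
  | h_step u hu ih =>
    have hb : b ≠ t.root := by
      rintro rfl; exact label_ne_label_root h hu hbu.symm
    rcases label_of_ne_root h hb with ⟨hbh, L, x, d, hpb, hb'⟩ | hb' <;>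
      rcases label_of_ne_root h hu with ⟨huh, L', x', d', hpu, hu'⟩ | hu' <;>
      rw [hb', hu', List.append_singleton_inj, Prod.mk.injEq] at hbu
    · obtain ⟨rfl, rfl, hd⟩ := hbu
      obtain rfl : d = d' := by omega
      rw [hbh, huh, ih (hpb.trans hpu.symm)]
    · omega
    · omega
    · exact h.2.1 hbu.2.1

end Tree

end HeavyPathLabel

open HeavyPathLabel

/-- The label of the nearest common ancestor of `u` and `v` is a function of
`ℓ u` and `ℓ v` alone (uniformly over all heavy-path labeled rooted trees):
there is a decoder `F` with `ℓ (nca u v) = F (ℓ u) (ℓ v)`. -/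
theorem stmt11 :
    ∃ F : List (ℕ × ℕ) → List (ℕ × ℕ) → List (ℕ × ℕ),
      ∀ (V : Type) [Fintype V] (t : ParentTree V) (heavy : V → V)
        (id : V → ℕ) (ℓ : V → List (ℕ × ℕ)), HeavyLabeling t heavy id ℓ →
        ∀ u v a : V,
          t.Descend a u → t.Descend a v →
          (∀ b, t.Descend b u → t.Descend b v → t.Descend b a) →
          ℓ a = F (ℓ u) (ℓ v) := by
  refine ⟨ncaLabel, fun V _ t heavy id ℓ h u v a hau hav hgreatest => ?_⟩
  have hu := labelLE_of_descend h (t.descend_root u)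
  have hv := labelLE_of_descend h (t.descend_root v)
  obtain ⟨c, hcu, hc⟩ := exists_descend_label_eq h u (ncaLabel_labelLE_left hu hv)
  obtain ⟨c', hc'v, hc'⟩ := exists_descend_label_eq h v (ncaLabel_labelLE_right hu hv)
  obtain rfl : c = c' := label_injective h (hc.trans hc'.symm)
  have hca : LabelLE (ℓ c) (ℓ a) := labelLE_of_descend h (hgreatest c hcu hc'v)
  have hac : LabelLE (ℓ a) (ℓ c) :=
    hc ▸ labelLE_ncaLabel (labelLE_of_descend h hau) (labelLE_of_descend h hav)
  rw [hac.antisymm hca, hc]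
end

section
/- Two nodes u and v of a rooted forest (with heavy-path labels computed within each tree) lie in the same tree if and only if the first pairs of their labels carry the same identifier; equivalently, they have a common ancestor iff the decoder nca(ℓ(u), ℓ(v)) is nonempty. -/
/-!
A heavy child's label differs from its parent's only in the last distance, and a light child's
label extends its parent's, so the first identifier is inherited from parent to child. Hence
the first identifier of every label is the identifier of the node's root. Two nodes share an
ancestor iff they have the same root, and `id` is injective.
-/

/-- A finite rooted forest, given by a parent function; roots are the fixed points,
and every node eventually reaches a root. -/
structure ParentForest (V : Type*) where
  parent : V → V
  reaches : ∀ v, ∃ n, parent (parent^[n] v) = parent^[n] v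

namespace ParentForest

variable {V : Type*}

def IsRoot (f : ParentForest V) (r : V) : Prop := f.parent r = r

/-- `u` is in the subtree rooted at `v`. -/
def Descend (f : ParentForest V) (v u : V) : Prop := ∃ n, f.parent^[n] u = v

noncomputable def size (f : ParentForest V) (v : V) : ℕ := Nat.card {u | f.Descend v u}

def IsChild (f : ParentForest V) (c v : V) : Prop := c ≠ v ∧ f.parent c = v

end ParentForest

def HeavyChoiceF {V : Type*} [Fintype V] (f : ParentForest V) (heavy : V → V) : Prop :=
  ∀ v, (∃ c, f.IsChild c v) →
    f.IsChild (heavy v) v ∧ ∀ c, f.IsChild c v → f.size c ≤ f.size (heavy v)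

/-- Heavy-path labeling of a rooted forest: within each tree, the root is labeled
`[(id root, 0)]`, a heavy child inherits the parent's label with last distance
incremented, and a light child appends `(own id, 0)`; hence the identifier of the
first pair of every label is the identifier of the tree's root. -/
def HeavyLabelingF {V : Type*} [Fintype V] (f : ParentForest V) (heavy : V → V)
    (id : V → ℕ) (ℓ : V → List (ℕ × ℕ)) : Prop :=
  HeavyChoiceF f heavy ∧ Function.Injective id ∧
  (∀ r, f.IsRoot r → ℓ r = [(id r, 0)]) ∧
  ∀ v, ¬ f.IsRoot v →
    (v = heavy (f.parent v) →
      ∃ L x d, ℓ (f.parent v) = L ++ [(x, d)] ∧ ℓ v = L ++ [(x, d + 1)]) ∧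
    (v ≠ heavy (f.parent v) → ℓ v = ℓ (f.parent v) ++ [(id v, 0)])

namespace ParentForest

variable {V : Type*} (f : ParentForest V)

theorem induction_on_parent {P : V → Prop} (root : ∀ r, f.IsRoot r → P r)
    (step : ∀ v, ¬ f.IsRoot v → P (f.parent v) → P v) (v : V) : P v := by
  obtain ⟨n, hn⟩ := f.reaches v
  induction n generalizing v with
  | zero => exact root v hn
  | succ n ih =>
    by_cases hv : f.IsRoot v
    · exact root v hv
    · exact step v hv (ih _ (by rwa [Function.iterate_succ_apply] at hn))

variable {f} in
theorem Descend.trans {a b c : V} (hab : f.Descend a b) (hbc : f.Descend b c) :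
    f.Descend a c := by
  obtain ⟨m, rfl⟩ := hab
  obtain ⟨n, rfl⟩ := hbc
  exact ⟨m + n, Function.iterate_add_apply _ _ _ _⟩

variable {f} in
theorem IsRoot.eq_of_descend {r r' u : V} (hr : f.IsRoot r) (hr' : f.IsRoot r')
    (h : f.Descend r u) (h' : f.Descend r' u) : r = r' := by
  obtain ⟨m, rfl⟩ := h
  obtain ⟨n, rfl⟩ := h'
  wlog hle : m ≤ n generalizing m n
  · exact (this n hr' m hr (by omega)).symm
  calc f.parent^[m] u = f.parent^[n - m] (f.parent^[m] u) := (Function.iterate_fixed hr _).symm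
    _ = f.parent^[n] u := by rw [← Function.iterate_add_apply, Nat.sub_add_cancel hle]

open Classical in
noncomputable def rootOf (v : V) : V := f.parent^[Nat.find (f.reaches v)] v

open Classical in
theorem isRoot_rootOf (v : V) : f.IsRoot (f.rootOf v) :=
  Nat.find_spec (f.reaches v)

theorem descend_rootOf (v : V) : f.Descend (f.rootOf v) v := ⟨_, rfl⟩

theorem rootOf_eq_of_descend {r u : V} (hr : f.IsRoot r) (h : f.Descend r u) :
    f.rootOf u = r :=
  (f.isRoot_rootOf u).eq_of_descend hr (f.descend_rootOf u) h

theorem rootOf_of_isRoot {r : V} (hr : f.IsRoot r) : f.rootOf r = r :=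
  f.rootOf_eq_of_descend hr ⟨0, rfl⟩

variable {f} in
theorem Descend.rootOf_eq {a u : V} (h : f.Descend a u) : f.rootOf u = f.rootOf a :=
  f.rootOf_eq_of_descend (f.isRoot_rootOf a) ((f.descend_rootOf a).trans h)

theorem rootOf_parent (v : V) : f.rootOf (f.parent v) = f.rootOf v :=
  (Descend.rootOf_eq ⟨1, rfl⟩).symm

theorem exists_descend_descend_iff {u v : V} :
    (∃ a, f.Descend a u ∧ f.Descend a v) ↔ f.rootOf u = f.rootOf v := by
  constructor
  · rintro ⟨a, hu, hv⟩
    rw [hu.rootOf_eq, hv.rootOf_eq]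
  · intro h
    exact ⟨f.rootOf u, f.descend_rootOf u, h ▸ f.descend_rootOf v⟩

end ParentForest

theorem HeavyLabelingF.head?_map_fst {V : Type*} [Fintype V] {f : ParentForest V}
    {heavy : V → V} {id : V → ℕ} {ℓ : V → List (ℕ × ℕ)} (hl : HeavyLabelingF f heavy id ℓ)
    (v : V) : (ℓ v).head?.map Prod.fst = some (id (f.rootOf v)) := by
  obtain ⟨-, -, hroot, hstep⟩ := hl
  induction v using f.induction_on_parent with
  | root r hr => simp [hroot r hr, f.rootOf_of_isRoot hr]
  | step v hv ih =>
    rw [f.rootOf_parent] at ih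
    by_cases hheavy : v = heavy (f.parent v)
    · obtain ⟨L, x, d, hparent, hchild⟩ := (hstep v hv).1 hheavy
      rw [hparent] at ih
      rw [hchild]
      cases L <;> simpa using ih
    · have hne : ℓ (f.parent v) ≠ [] := by
        rintro hnil
        simp [hnil] at ih
      rw [(hstep v hv).2 hheavy, List.head?_append_of_ne_nil _ hne, ih]

/-- Two nodes of a rooted forest lie in the same tree (equivalently, have a common
ancestor) iff the first pairs of their heavy-path labels carry the same identifier. -/
theorem stmt12 {V : Type*} [Fintype V] (f : ParentForest V) (heavy : V → V)
    (id : V → ℕ) (ℓ : V → List (ℕ × ℕ)) (hl : HeavyLabelingF f heavy id ℓ)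
    (u v : V) :
    (∃ a, f.Descend a u ∧ f.Descend a v) ↔
      ∃ p q : ℕ × ℕ, (ℓ u).head? = some p ∧ (ℓ v).head? = some q ∧ p.1 = q.1 := by
  obtain ⟨p, hpu, hp⟩ := Option.map_eq_some_iff.1 (hl.head?_map_fst u)
  obtain ⟨q, hqv, hq⟩ := Option.map_eq_some_iff.1 (hl.head?_map_fst v)
  rw [f.exists_descend_descend_iff]
  constructor
  · intro h
    exact ⟨p, q, hpu, hqv, by rw [hp, hq, h]⟩
  · rintro ⟨p', q', hp', hq', hpq⟩
    rw [hpu, Option.some_inj] at hp'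
    rw [hqv, Option.some_inj] at hq'
    subst hp' hq'
    exact hl.2.1 (hp.symm.trans (hpq.trans hq))
end

section
/- Suppose the vertex set of a graph is partitioned into k ≥ 2 fragments, and there is a strict total order on the edges (by weight with identifier tie-breaking). If every fragment selects its minimum outgoing edge with respect to this order, then there exist at least two fragments that select the same edge. -/
/-!
Take a fragment `i` whose selected edge `e` is minimal among all selected edges. The edge `e`
leaves `i` towards some other fragment `j`, so it is also an outgoing edge of `j`; hence the
selection of `j` is at most `e`, and by minimality of `e` it equals `e`.
-/

def SimpleGraph.IsMinOutgoingEdge {V ι : Type*} (G : SimpleGraph V) (frag : V → ι)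
    (lt : Sym2 V → Sym2 V → Prop) (i : ι) (e : Sym2 V) : Prop :=
  (∃ u v, e = s(u, v) ∧ G.Adj u v ∧ frag u = i ∧ frag v ≠ i) ∧
    ∀ x y, G.Adj x y → frag x = i → frag y ≠ i → e = s(x, y) ∨ lt e s(x, y)

theorem SimpleGraph.IsMinOutgoingEdge.exists_ne_le {V ι : Type*} {G : SimpleGraph V}
    {frag : V → ι} {lt : Sym2 V → Sym2 V → Prop} {sel : ι → Sym2 V}
    (hsel : ∀ i, G.IsMinOutgoingEdge frag lt i (sel i)) (i : ι) :
    ∃ j ≠ i, sel j = sel i ∨ lt (sel j) (sel i) := by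
  obtain ⟨⟨u, v, hsel_i, hadj, hu, hv⟩, -⟩ := hsel i
  refine ⟨frag v, hv, ?_⟩
  rw [hsel_i, Sym2.eq_swap]
  exact (hsel (frag v)).2 v u hadj.symm rfl (hu ▸ Ne.symm hv)

theorem exists_ne_apply_eq_of_forall_exists_ne {ι α : Type*} [Finite ι] [Nonempty ι]
    (r : α → α → Prop) [IsTrans α r] [Std.Irrefl r] (f : ι → α)
    (h : ∀ i, ∃ j ≠ i, f j = f i ∨ r (f j) (f i)) :
    ∃ i j, i ≠ j ∧ f i = f j := by
  obtain ⟨i, -, hmin⟩ := (Finite.wellFounded_of_trans_of_irrefl (InvImage r f)).has_min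
    Set.univ Set.univ_nonempty
  obtain ⟨j, hji, hj | hj⟩ := h i
  · exact ⟨j, i, hji, hj⟩
  · exact absurd hj (hmin j trivial)

theorem stmt14_general {V ι : Type*} [Fintype ι] (G : SimpleGraph V)
    (frag : V → ι) (hk : 2 ≤ Fintype.card ι)
    (lt : Sym2 V → Sym2 V → Prop) (hlt : IsStrictTotalOrder (Sym2 V) lt)
    (sel : ι → Sym2 V)
    (hsel : ∀ i : ι,
      (∃ u v, sel i = s(u, v) ∧ G.Adj u v ∧ frag u = i ∧ frag v ≠ i) ∧
      ∀ x y, G.Adj x y → frag x = i → frag y ≠ i → sel i = s(x, y) ∨ lt (sel i) s(x, y)) :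
    ∃ i j : ι, i ≠ j ∧ sel i = sel j := by
  have : Nonempty ι := Fintype.card_pos_iff.mp (by omega)
  exact exists_ne_apply_eq_of_forall_exists_ne lt sel
    (SimpleGraph.IsMinOutgoingEdge.exists_ne_le hsel)

/-- If the vertices of a connected graph are partitioned into `k ≥ 2` fragments and
each fragment selects its minimum outgoing edge under a strict total order on edges,
then at least two fragments select the same edge. -/
theorem stmt14 {V ι : Type*} [Fintype V] [Fintype ι] (G : SimpleGraph V)
    (hG : G.Connected)
    (frag : V → ι) (hsurj : Function.Surjective frag) (hk : 2 ≤ Fintype.card ι)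
    (lt : Sym2 V → Sym2 V → Prop) (hlt : IsStrictTotalOrder (Sym2 V) lt)
    (sel : ι → Sym2 V)
    (hsel : ∀ i : ι,
      (∃ u v, sel i = s(u, v) ∧ G.Adj u v ∧ frag u = i ∧ frag v ≠ i) ∧
      ∀ x y, G.Adj x y → frag x = i → frag y ≠ i → sel i = s(x, y) ∨ lt (sel i) s(x, y)) :
    ∃ i j : ι, i ≠ j ∧ sel i = sel j :=
  stmt14_general G frag hk lt hlt sel hsel
end

section
/- Consider the directed graph on fragments where each fragment points to the fragment at the other endpoint of its selected minimum outgoing edge (under a strict total order on edges). Then every cycle in this fragment digraph has length exactly 2; consequently, merging fragments along mutually selected edges strictly decreases the number of fragments, and the union of all fragments' tree edges with all selected edges is acyclic. -/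
/-!
Since `sel i` leaves the fragment `next i`, minimality of `sel (next i)` gives either
`sel (next i) = sel i`, i.e. `next (next i) = i`, or `sel (next i) < sel i`. Along a cycle of
`next` the selected edges cannot strictly decrease all the way round, so some point of the cycle,
and hence every point, has period 2.

For acyclicity, let `sel i` be the largest non-tree edge of a cycle. The rest of the cycle joins
the endpoints of `sel i`, so it leaves fragment `i` through another non-tree edge; this edge is
smaller than `sel i` by maximality, yet not smaller by the minimality of `sel i`.
Finally, fragments are connected and each selected edge joins two of them, so the merged graph
has fewer components than there are fragments.
-/

open SimpleGraph Function

theorem Function.apply_apply_eq_of_isPeriodicPt {α β : Type*} (r : β → β → Prop)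
    [IsStrictOrder β r] {f : α → α} (w : α → β) (hf : ∀ a, f (f a) = a ∨ r (w (f a)) (w a))
    {n : ℕ} {a : α} (hn : 0 < n) (ha : IsPeriodicPt f n a) : f (f a) = a := by
  by_contra h
  -- `a` lies on the forward orbit of each `f^[k] a`, so none of these is 2-periodic.
  have hdec : ∀ k, r (w (f^[k + 1] a)) (w (f^[k] a)) := by
    intro k
    rw [iterate_succ_apply']
    refine (hf (f^[k] a)).resolve_left fun hk => h ?_
    have hback : f^[n * k - k] (f^[k] a) = a := by
      rw [← iterate_add_apply, Nat.sub_add_cancel (Nat.le_mul_of_pos_left k hn)]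
      exact (ha.mul_const k).eq
    rw [← hback, ← (Commute.iterate_self f _).eq, ← (Commute.iterate_self f _).eq, hk]
  have hchain : ∀ m, r (w (f^[m + 1] a)) (w a) := by
    intro m
    induction m with
    | zero => exact hdec 0
    | succ m ih => exact _root_.trans (hdec (m + 1)) ih
  have hself := hchain (n - 1)
  rw [Nat.sub_add_cancel hn, ha.eq] at hself
  exact irrefl _ hself

namespace SimpleGraph.Walk

variable {V : Type*} {G : SimpleGraph V}

theorem IsTrail.exists_walk_of_mem_edges {v a b : V} {p : G.Walk v v} (hp : p.IsTrail)
    (h : s(a, b) ∈ p.edges) :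
    ∃ q : G.Walk a b, (∀ e ∈ q.edges, e ∈ p.edges) ∧ s(a, b) ∉ q.edges := by
  have hab := p.adj_of_mem_edges h
  rcases (isSubwalk_toWalk_iff_mem_edges hab).2 h with ⟨ru, rv, rfl⟩ | ⟨ru, rv, rfl⟩
  · exact ⟨(rv.append ru).reverse, by aesop, by aesop⟩
  · exact ⟨rv.append ru, by aesop, by aesop (add simp Sym2.eq_swap)⟩

end SimpleGraph.Walk

theorem SimpleGraph.card_connectedComponent_lt_of_adj {V ι : Type*} [Fintype ι]
    {H : SimpleGraph V} {frag : V → ι} (hsurj : Surjective frag)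
    (hreach : ∀ u v, frag u = frag v → H.Reachable u v) {u v : V} (huv : H.Adj u v)
    (hne : frag u ≠ frag v) : Nat.card H.ConnectedComponent < Fintype.card ι := by
  set g : ι → H.ConnectedComponent := fun i => H.connectedComponentMk (surjInv hsurj i)
  have hg : ∀ x, g (frag x) = H.connectedComponentMk x := fun x =>
    ConnectedComponent.sound (hreach _ _ (surjInv_eq hsurj _))
  have hsurj_g : Surjective g := fun c => c.ind fun x => ⟨frag x, hg x⟩
  have hninj_g : ¬ Injective g := fun hinj =>
    hne (hinj ((hg u).trans ((ConnectedComponent.sound huv.reachable).trans (hg v).symm)))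
  have := Finite.of_surjective g hsurj_g
  have := Fintype.ofFinite H.ConnectedComponent
  rw [Nat.card_eq_fintype_card]
  exact Fintype.card_lt_of_surjective_not_injective g hsurj_g hninj_g

section Fragments

variable {V ι : Type*}

def IsMinOutgoingSelection (G : SimpleGraph V) (frag : V → ι) (lt : Sym2 V → Sym2 V → Prop)
    (sel : ι → Sym2 V) (next : ι → ι) : Prop :=
  ∀ i : ι,
    (∃ u v, sel i = s(u, v) ∧ G.Adj u v ∧ frag u = i ∧ frag v ≠ i ∧ next i = frag v) ∧
    ∀ x y, G.Adj x y → frag x = i → frag y ≠ i → sel i = s(x, y) ∨ lt (sel i) s(x, y)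

namespace IsMinOutgoingSelection

variable {G : SimpleGraph V} {frag : V → ι} {lt : Sym2 V → Sym2 V → Prop} {sel : ι → Sym2 V}
  {next : ι → ι}

theorem next_ne (hsel : IsMinOutgoingSelection G frag lt sel next) (i : ι) : next i ≠ i := by
  obtain ⟨u, v, -, -, -, hv, hnext⟩ := (hsel i).1
  exact hnext ▸ hv

theorem sel_mem_edgeSet (hsel : IsMinOutgoingSelection G frag lt sel next) (i : ι) :
    sel i ∈ G.edgeSet := by
  obtain ⟨u, v, hs, huv, -⟩ := (hsel i).1
  exact hs ▸ huv

theorem next_next_eq_or_lt (hsel : IsMinOutgoingSelection G frag lt sel next) (i : ι) :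
    next (next i) = i ∨ lt (sel (next i)) (sel i) := by
  obtain ⟨u, v, hs, huv, hu, hv, hnext⟩ := (hsel i).1
  have hu' : frag u ≠ next i := hu ▸ (hsel.next_ne i).symm
  rcases (hsel (next i)).2 v u huv.symm hnext.symm hu' with h | h
  · obtain ⟨u', v', hs', -, hu'', -, hnext'⟩ := (hsel (next i)).1
    rw [h, Sym2.eq_iff] at hs'
    rcases hs' with ⟨-, rfl⟩ | ⟨-, rfl⟩
    · exact Or.inl (hnext'.trans hu)
    · exact absurd hu'' hu'
  · exact Or.inr (by rwa [hs, Sym2.eq_swap])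

theorem isAcyclic_sup [Finite V] [IsStrictOrder (Sym2 V) lt]
    (hsel : IsMinOutgoingSelection G frag lt sel next) {F : SimpleGraph V} (hF : F.IsAcyclic)
    (hint : ∀ u v, F.Adj u v → frag u = frag v) :
    (F ⊔ fromEdgeSet {e | ∃ i, e = sel i}).IsAcyclic := by
  intro v p hp
  have hsel_of : ∀ e ∈ p.edges, e ∉ F.edgeSet → ∃ i, e = sel i := fun e he heF => by
    have := p.edges_subset_edgeSet he
    simp only [edgeSet_sup, edgeSet_fromEdgeSet, Set.mem_union, Set.mem_sdiff] at this
    tauto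
  have hS : {e | e ∈ p.edges ∧ e ∉ F.edgeSet}.Nonempty := by
    by_contra! hS
    have hpF : ∀ e ∈ p.edges, e ∈ F.edgeSet := fun e he => by
      by_contra heF
      exact hS.subset ⟨he, heF⟩
    exact hF _ (hp.transfer hpF)
  -- the `lt`-largest edge of the cycle outside `F`
  obtain ⟨e, ⟨hep, heF⟩, hmax⟩ :=
    (Finite.wellFounded_of_trans_of_irrefl (swap lt)).has_min _ hS
  obtain ⟨i, rfl⟩ := hsel_of e hep heF
  obtain ⟨u, w, hs, -, hu, hw, -⟩ := (hsel i).1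
  obtain ⟨q, hqp, hq⟩ := hp.isTrail.exists_walk_of_mem_edges (hs ▸ hep)
  obtain ⟨d, hd, hdu, hdw⟩ := q.exists_boundary_dart {x | frag x = i} hu hw
  have hdq : d.edge ∈ q.edges := List.mem_map_of_mem hd
  have hdF : d.edge ∉ F.edgeSet := fun h => hdw ((hint _ _ h).symm.trans hdu)
  obtain ⟨j, hj⟩ := hsel_of _ (hqp _ hdq) hdF
  have hdG : G.Adj d.fst d.snd := (hj ▸ hsel.sel_mem_edgeSet j : d.edge ∈ G.edgeSet)
  rcases (hsel i).2 _ _ hdG hdu hdw with h | h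
  · exact hq (hs ▸ h ▸ hdq)
  · exact hmax _ ⟨hqp _ hdq, hdF⟩ h

end IsMinOutgoingSelection

end Fragments

theorem stmt15_general {V ι : Type*} [Fintype V] [Fintype ι] (G F : SimpleGraph V)
    (hFacyclic : F.IsAcyclic)
    (frag : V → ι) (hsurj : Function.Surjective frag) (hk : 2 ≤ Fintype.card ι)
    (hint : ∀ u v, F.Adj u v → frag u = frag v)
    (hconn : ∀ u v, frag u = frag v → F.Reachable u v)
    (lt : Sym2 V → Sym2 V → Prop) (hlt : IsStrictTotalOrder (Sym2 V) lt)
    (sel : ι → Sym2 V) (next : ι → ι)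
    (hsel : ∀ i : ι,
      (∃ u v, sel i = s(u, v) ∧ G.Adj u v ∧ frag u = i ∧ frag v ≠ i ∧ next i = frag v) ∧
      ∀ x y, G.Adj x y → frag x = i → frag y ≠ i → sel i = s(x, y) ∨ lt (sel i) s(x, y)) :
    (∀ (i : ι) (n : ℕ), 0 < n → next^[n] i = i → (next (next i) = i ∧ next i ≠ i)) ∧
    (F ⊔ SimpleGraph.fromEdgeSet {e | ∃ i, e = sel i}).IsAcyclic ∧
    Nat.card (F ⊔ SimpleGraph.fromEdgeSet {e | ∃ i, e = sel i}).ConnectedComponent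
      < Fintype.card ι := by
  have hsel : IsMinOutgoingSelection G frag lt sel next := hsel
  refine ⟨fun i n hn hi => ⟨apply_apply_eq_of_isPeriodicPt lt sel hsel.next_next_eq_or_lt hn hi,
    hsel.next_ne i⟩, hsel.isAcyclic_sup hFacyclic hint, ?_⟩
  obtain ⟨i⟩ : Nonempty ι := Fintype.card_pos_iff.mp (by omega)
  obtain ⟨u, v, hs, huv, hu, hv, -⟩ := (hsel i).1
  have hmerge : (F ⊔ fromEdgeSet {e | ∃ i, e = sel i}).Adj u v :=
    Or.inr ⟨⟨i, hs.symm⟩, huv.ne⟩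
  exact card_connectedComponent_lt_of_adj hsurj (fun x y h => (hconn x y h).mono le_sup_left)
    hmerge (hu ▸ hv.symm)

/-- Fragment digraph of a merging step: each fragment (a subtree of the forest `F`)
points, via `next`, to the fragment across its selected minimum outgoing edge.
Then (a) every cycle of the fragment digraph has length exactly 2, (b) the union of
all fragments' tree edges with all selected edges is acyclic, and (c) merging
fragments along selected edges strictly decreases the number of fragments. -/
theorem stmt15 {V ι : Type*} [Fintype V] [Fintype ι] (G F : SimpleGraph V)
    (hG : G.Connected) (hFG : F ≤ G) (hFacyclic : F.IsAcyclic)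
    (frag : V → ι) (hsurj : Function.Surjective frag) (hk : 2 ≤ Fintype.card ι)
    (hint : ∀ u v, F.Adj u v → frag u = frag v)
    (hconn : ∀ u v, frag u = frag v → F.Reachable u v)
    (lt : Sym2 V → Sym2 V → Prop) (hlt : IsStrictTotalOrder (Sym2 V) lt)
    (sel : ι → Sym2 V) (next : ι → ι)
    (hsel : ∀ i : ι,
      (∃ u v, sel i = s(u, v) ∧ G.Adj u v ∧ frag u = i ∧ frag v ≠ i ∧ next i = frag v) ∧
      ∀ x y, G.Adj x y → frag x = i → frag y ≠ i → sel i = s(x, y) ∨ lt (sel i) s(x, y)) :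
    (∀ (i : ι) (n : ℕ), 0 < n → next^[n] i = i → (next (next i) = i ∧ next i ≠ i)) ∧
    (F ⊔ SimpleGraph.fromEdgeSet {e | ∃ i, e = sel i}).IsAcyclic ∧
    Nat.card (F ⊔ SimpleGraph.fromEdgeSet {e | ∃ i, e = sel i}).ConnectedComponent
      < Fintype.card ι :=
  stmt15_general G F hFacyclic frag hsurj hk hint hconn lt hlt sel next hsel
end
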